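/- arXiv:2403.16413 — 5 statements merged into one kernel-verified Lean document; each statement's English description precedes it below -/
import Mathlib

section
/- Let α ∈ (0,1). Every measurable test ψ : ℝ → [0,1] with size ∫ψ dμ_0 ≤ α satisfies, for every h > 0, ∫ψ dμ_h ≤ min{α·e^{h/λ}, 1}. (That is, min{α·e^{h/λ}, 1} is the power envelope at level α for testing μ_0 against the positive local alternatives μ_h, h > 0.) -/
/-! On its support `w > h` the density of `μ_h` is `e^{h/λ}` times that of `μ_0`, so
`μ_h ≤ e^{h/λ} μ_0` as measures and the power of a nonnegative test at `μ_h` is at most `e^{h/λ}`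
times its size. The bound by `1` holds because `μ_h`, a translate of the exponential
distribution, is a probability measure and `ψ ≤ 1`. -/

open MeasureTheory Real

noncomputable section

attribute [local instance] Classical.propDecidable

/-- The exponential distribution with scale `lam` shifted to start at `h`:
the measure on `ℝ` with Lebesgue density `w ↦ lam⁻¹ e^{−(w−h)/lam} 𝟙{w > h}`. -/
def expShift (lam h : ℝ) : Measure ℝ :=
  (volume : Measure ℝ).withDensity fun w =>
    ENNReal.ofReal (lam⁻¹ * exp (-(w - h) / lam) * if h < w then 1 else 0)

open ProbabilityTheory
open scoped ENNReal

lemma integral_le_toReal_mul_integral_of_le_smul {α : Type*} [MeasurableSpace α]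
    {μ ν : Measure α} {c : ℝ≥0∞} (hc : c ≠ ∞) (hνμ : ν ≤ c • μ) {f : α → ℝ}
    (hf : 0 ≤ᵐ[μ] f) (hfi : Integrable f μ) :
    ∫ x, f x ∂ν ≤ c.toReal * ∫ x, f x ∂μ := by
  calc ∫ x, f x ∂ν ≤ ∫ x, f x ∂(c • μ) :=
        integral_mono_measure hνμ (Measure.ae_smul_measure hf c) (hfi.smul_measure hc)
    _ = c.toReal * ∫ x, f x ∂μ := by rw [integral_smul_measure, smul_eq_mul]

lemma integral_le_one_of_mem_Icc {α : Type*} [MeasurableSpace α] {μ : Measure α}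
    [IsProbabilityMeasure μ] {f : α → ℝ} (hf : ∀ x, f x ∈ Set.Icc (0 : ℝ) 1) :
    ∫ x, f x ∂μ ≤ 1 := by
  have hbound : ∀ᵐ x ∂μ, ‖f x‖ ≤ 1 :=
    ae_of_all _ fun x => by rw [norm_of_nonneg (hf x).1]; exact (hf x).2
  calc ∫ x, f x ∂μ ≤ ‖∫ x, f x ∂μ‖ := le_norm_self _
    _ ≤ 1 * μ.real Set.univ := norm_integral_le_of_norm_le_const hbound
    _ = 1 := by simp

lemma exponentialPDF_sub_le {r h : ℝ} (hh : 0 ≤ h) (w : ℝ) :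
    exponentialPDF r (w - h) ≤ ENNReal.ofReal (exp (r * h)) * exponentialPDF r w := by
  rcases lt_or_ge (w - h) 0 with hw | hw
  · simp [exponentialPDF_of_neg hw]
  · rw [exponentialPDF_of_nonneg hw, exponentialPDF_of_nonneg (by linarith),
      ← ENNReal.ofReal_mul (exp_pos _).le]
    refine ENNReal.ofReal_le_ofReal (le_of_eq ?_)
    rw [mul_left_comm, ← exp_add]
    congr 2
    ring

lemma expShift_eq_withDensity_exponentialPDF (lam h : ℝ) :
    expShift lam h = volume.withDensity fun w => exponentialPDF lam⁻¹ (w - h) := by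
  refine withDensity_congr_ae ?_
  filter_upwards [Measure.ae_ne volume h] with w hw
  rcases hw.lt_or_gt with hw | hw
  · simp [hw.not_gt, exponentialPDF_of_neg (sub_neg.mpr hw)]
  · simp [hw, exponentialPDF_of_nonneg (sub_pos.mpr hw).le, div_eq_inv_mul, ← mul_neg]

lemma isProbabilityMeasure_expShift {lam : ℝ} (hlam : 0 < lam) (h : ℝ) :
    IsProbabilityMeasure (expShift lam h) := by
  constructor
  rw [expShift_eq_withDensity_exponentialPDF, withDensity_apply _ MeasurableSet.univ,
    Measure.restrict_univ, lintegral_sub_right_eq_self (exponentialPDF lam⁻¹) h,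
    lintegral_exponentialPDF_eq_one (inv_pos.mpr hlam)]

lemma expShift_le_smul_expShift_zero (lam : ℝ) {h : ℝ} (hh : 0 ≤ h) :
    expShift lam h ≤ ENNReal.ofReal (exp (h / lam)) • expShift lam 0 := by
  simp only [expShift_eq_withDensity_exponentialPDF, sub_zero]
  rw [← withDensity_smul' _ _ ENNReal.ofReal_ne_top]
  refine withDensity_mono (ae_of_all _ fun w => ?_)
  simpa [div_eq_inv_mul] using exponentialPDF_sub_le (r := lam⁻¹) hh w

theorem power_envelope_pos_general (lam α : ℝ) (hlam : 0 < lam)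
    (ψ : ℝ → ℝ) (hmeas : Measurable ψ) (hrange : ∀ w, ψ w ∈ Set.Icc (0 : ℝ) 1)
    (hsize : ∫ w, ψ w ∂ expShift lam 0 ≤ α) :
    ∀ h : ℝ, 0 < h → ∫ w, ψ w ∂ expShift lam h ≤ min (α * exp (h / lam)) 1 := by
  intro h hh
  have := isProbabilityMeasure_expShift hlam
  have hψ_int : Integrable ψ (expShift lam 0) :=
    .of_bound hmeas.aestronglyMeasurable 1 (ae_of_all _ fun w => by
      rw [norm_of_nonneg (hrange w).1]; exact (hrange w).2)
  refine le_min ?_ (integral_le_one_of_mem_Icc hrange)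
  calc ∫ w, ψ w ∂expShift lam h
      ≤ (ENNReal.ofReal (exp (h / lam))).toReal * ∫ w, ψ w ∂expShift lam 0 :=
        integral_le_toReal_mul_integral_of_le_smul ENNReal.ofReal_ne_top
          (expShift_le_smul_expShift_zero lam hh.le) (ae_of_all _ fun w => (hrange w).1) hψ_int
    _ = exp (h / lam) * ∫ w, ψ w ∂expShift lam 0 := by rw [ENNReal.toReal_ofReal (exp_pos _).le]
    _ ≤ α * exp (h / lam) := by rw [mul_comm]; gcongr

/-- Power envelope against positive alternatives: any level-`α` test of `μ_0`
has power at most `min{α e^{h/λ}, 1}` at `μ_h`, `h > 0`. -/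
theorem power_envelope_pos (lam α : ℝ) (hlam : 0 < lam) (hα : α ∈ Set.Ioo (0 : ℝ) 1)
    (ψ : ℝ → ℝ) (hmeas : Measurable ψ) (hrange : ∀ w, ψ w ∈ Set.Icc (0 : ℝ) 1)
    (hsize : ∫ w, ψ w ∂ expShift lam 0 ≤ α) :
    ∀ h : ℝ, 0 < h → ∫ w, ψ w ∂ expShift lam h ≤ min (α * exp (h / lam)) 1 :=
  power_envelope_pos_general lam α hlam ψ hmeas hrange hsize
end
end

section
/- Let λ > 0, α ∈ (0,1), and h, h̄ > 0. If α ≤ e^{−h̄/λ}, then min{α·e^{h/λ}, 1} ≥ α·e^{min{h,h̄}/λ}. If α > e^{−h̄/λ}, then min{α·e^{h/λ}, 1} ≥ (α − e^{−h̄/λ})/(1 − e^{−h̄/λ}) + min{e^{(h−h̄)/λ}, 1}·(1 − α)/(1 − e^{−h̄/λ}). (That is, the power envelope Π(h) = min{α·e^{h/λ}, 1} dominates the lower power bound π_L(h,h̄) of the one-sided NLR test for all h, h̄ > 0.) -/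
/-!
With `E = e^{-h̄/λ}` and `x = e^{h/λ} ≥ 1`, the first claim is monotonicity of `exp` together with
`α e^{h̄/λ} ≤ E e^{h̄/λ} = 1`. In the second, `π_L` is the affine function of `α` taking the value
`min{xE, 1}` at `α = E` and `1` at `α = 1`, while `α x` takes the values `xE` and `x ≥ 1` there;
comparing at the two endpoints of `[E, 1]` gives `π_L ≤ α x`, and `π_L ≤ 1` since it interpolates
values `≤ 1`.
-/

open Real

theorem mul_exp_le_one_of_le_exp_neg {α s t : ℝ} (hα : α ≤ exp (-t)) (hst : s ≤ t) :
    α * exp s ≤ 1 :=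
  calc α * exp s ≤ exp (-t) * exp t := mul_le_mul hα (exp_le_exp.2 hst) (exp_pos s).le (exp_pos _).le
    _ = 1 := by rw [← exp_add, neg_add_cancel, exp_zero]

theorem sub_div_add_mul_div_le_min {α E x m : ℝ} (hEα : E < α) (hα : α ≤ 1) (hx : 1 ≤ x)
    (hmx : m ≤ x * E) (hm : m ≤ 1) :
    (α - E) / (1 - E) + m * (1 - α) / (1 - E) ≤ min (α * x) 1 := by
  have hE : 0 < 1 - E := by linarith
  rw [← add_div]
  refine le_min ?_ ?_ <;> rw [div_le_iff₀ hE]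
  · nlinarith [mul_le_mul_of_nonneg_right hmx (sub_nonneg.2 hα),
      mul_nonneg (sub_nonneg.2 hEα.le) (sub_nonneg.2 hx)]
  · nlinarith [mul_le_mul_of_nonneg_right hm (sub_nonneg.2 hα)]

theorem envelope_dominates_piL_general (lam α h hb : ℝ) (hlam : 0 < lam)
    (hα : α ∈ Set.Ioo (0 : ℝ) 1) (hh : 0 < h) :
    (α ≤ exp (-hb / lam) →
      α * exp (min h hb / lam) ≤ min (α * exp (h / lam)) 1) ∧
    (exp (-hb / lam) < α →
      (α - exp (-hb / lam)) / (1 - exp (-hb / lam)) +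
          min (exp ((h - hb) / lam)) 1 * (1 - α) / (1 - exp (-hb / lam)) ≤
        min (α * exp (h / lam)) 1) := by
  obtain ⟨hα0, hα1⟩ := hα
  have hdiv {a b : ℝ} (hab : a ≤ b) : a / lam ≤ b / lam := div_le_div_of_nonneg_right hab hlam.le
  refine ⟨fun hαE => le_min ?_ ?_, fun hEα => ?_⟩
  · exact mul_le_mul_of_nonneg_left (exp_le_exp.2 (hdiv (min_le_left h hb))) hα0.le
  · rw [neg_div] at hαE
    exact mul_exp_le_one_of_le_exp_neg hαE (hdiv (min_le_right h hb))
  · have hsplit : exp ((h - hb) / lam) = exp (h / lam) * exp (-hb / lam) := by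
      rw [← exp_add, sub_eq_add_neg, add_div]
    exact sub_div_add_mul_div_le_min hEα hα1.le (one_le_exp (div_nonneg hh.le hlam.le))
      (hsplit ▸ min_le_left _ _) (min_le_right _ _)

/-- The power envelope `Π(h) = min{α e^{h/λ}, 1}` dominates the lower power bound
`π_L(h, h̄)` of the one-sided NLR test, for all `h, h̄ > 0`. -/
theorem envelope_dominates_piL (lam α h hb : ℝ) (hlam : 0 < lam)
    (hα : α ∈ Set.Ioo (0 : ℝ) 1) (hh : 0 < h) (hhb : 0 < hb) :
    (α ≤ exp (-hb / lam) →
      α * exp (min h hb / lam) ≤ min (α * exp (h / lam)) 1) ∧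
    (exp (-hb / lam) < α →
      (α - exp (-hb / lam)) / (1 - exp (-hb / lam)) +
          min (exp ((h - hb) / lam)) 1 * (1 - α) / (1 - exp (-hb / lam)) ≤
        min (α * exp (h / lam)) 1) :=
  envelope_dominates_piL_general lam α h hb hlam hα hh
end

section
/- Let α ∈ (0,1). Every measurable test ψ : ℝ → [0,1] with size ∫ψ dμ_0 ≤ α satisfies, for every h ≤ 0, ∫ψ dμ_h ≤ 1 − (1 − α)·e^{h/λ}. (That is, 1 − (1 − α)·e^{h/λ} is the power envelope at level α for testing μ_0 against the negative local alternatives μ_h, h < 0.) -/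
open MeasureTheory Real

noncomputable section

attribute [local instance] Classical.propDecidable

/-!
For `h ≤ h'` the density of `μ_h` on `(h', ∞)` is `e^{(h - h')/λ}` times that of `μ_{h'}`, so
`μ_h = μ_h|_{(-∞, h']} + e^{(h - h')/λ} μ_{h'}`. Comparing total masses gives
`μ_h (-∞, h'] = 1 - e^{(h - h')/λ}`, hence a test with values in `[0, 1]` has power at most
`1 - e^{(h - h')/λ} + e^{(h - h')/λ} · (its size under μ_{h'})`.
-/

open Set ProbabilityTheory

def expShiftDensity (lam h w : ℝ) : ENNReal :=
  ENNReal.ofReal (lam⁻¹ * exp (-(w - h) / lam) * if h < w then 1 else 0)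

namespace expShift

variable {lam h h' : ℝ}

theorem eq_withDensity (lam h : ℝ) :
    expShift lam h = volume.withDensity (expShiftDensity lam h) := rfl

theorem measurable_density (lam h : ℝ) : Measurable (expShiftDensity lam h) := by
  unfold expShiftDensity
  exact ((measurable_const.mul (by fun_prop)).mul
    (Measurable.ite measurableSet_Ioi measurable_const measurable_const)).ennreal_ofReal

theorem density_ae_eq_exponentialPDF (lam h : ℝ) :
    expShiftDensity lam h =ᵐ[volume] fun w => exponentialPDF lam⁻¹ (w - h) := by
  filter_upwards [Measure.ae_ne volume h] with w hw
  rw [expShiftDensity, exponentialPDF_eq]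
  rcases hw.lt_or_gt with hwh | hhw
  · simp [hwh.not_gt, sub_nonneg.not.mpr hwh.not_ge]
  · simp [hhw, sub_nonneg.mpr hhw.le]
    ring_nf

theorem isProbabilityMeasure (hlam : 0 < lam) (h : ℝ) :
    IsProbabilityMeasure (expShift lam h) := by
  constructor
  rw [eq_withDensity, withDensity_apply _ MeasurableSet.univ, Measure.restrict_univ,
    lintegral_congr_ae (density_ae_eq_exponentialPDF lam h),
    lintegral_sub_right_eq_self (exponentialPDF lam⁻¹),
    lintegral_exponentialPDF_eq_one (inv_pos.mpr hlam)]

theorem density_eq_indicator_add_smul (lam : ℝ) (hh : h ≤ h') :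
    expShiftDensity lam h = (Iic h').indicator (expShiftDensity lam h) +
      ENNReal.ofReal (exp ((h - h') / lam)) • expShiftDensity lam h' := by
  ext w
  rcases le_or_gt w h' with hw | hw
  · simp [indicator_of_mem (show w ∈ Iic h' from hw), expShiftDensity, hw.not_gt]
  · have hhw : h < w := hh.trans_lt hw
    simp only [Pi.add_apply, Pi.smul_apply, smul_eq_mul, expShiftDensity, hw, hhw,
      indicator_of_notMem (show w ∉ Iic h' from not_le.mpr hw), if_true, mul_one, zero_add]
    rw [← ENNReal.ofReal_mul (exp_pos _).le]
    congr 1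
    rw [mul_left_comm, ← exp_add]
    ring_nf

theorem eq_restrict_add_smul (lam : ℝ) (hh : h ≤ h') :
    expShift lam h = (expShift lam h).restrict (Iic h') +
      ENNReal.ofReal (exp ((h - h') / lam)) • expShift lam h' := by
  conv_lhs => rw [eq_withDensity, density_eq_indicator_add_smul lam hh]
  rw [withDensity_add_left ((measurable_density lam h).indicator measurableSet_Iic),
    withDensity_indicator measurableSet_Iic, withDensity_smul _ (measurable_density lam h'),
    eq_withDensity, eq_withDensity, restrict_withDensity measurableSet_Iic]

theorem measureReal_Iic (hlam : 0 < lam) (hh : h ≤ h') :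
    (expShift lam h).real (Iic h') = 1 - exp ((h - h') / lam) := by
  have := isProbabilityMeasure hlam h
  have := isProbabilityMeasure hlam h'
  have hmass := congrArg (fun μ : Measure ℝ => μ.real univ) (eq_restrict_add_smul lam hh)
  rw [measureReal_add_apply (h₂ := by simp), measureReal_ennreal_smul_apply,
    measureReal_restrict_apply_univ, probReal_univ, probReal_univ, mul_one,
    ENNReal.toReal_ofReal (exp_pos _).le] at hmass
  linarith

theorem integral_le_tail_add_mul_integral (hlam : 0 < lam) (hh : h ≤ h') {ψ : ℝ → ℝ}
    (hψ : Measurable ψ) (hψ01 : ∀ w, ψ w ∈ Icc (0 : ℝ) 1) :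
    ∫ w, ψ w ∂expShift lam h ≤
      1 - exp ((h - h') / lam) + exp ((h - h') / lam) * ∫ w, ψ w ∂expShift lam h' := by
  have := isProbabilityMeasure hlam h
  have := isProbabilityMeasure hlam h'
  have hint : ∀ (μ : Measure ℝ) [IsFiniteMeasure μ], Integrable ψ μ := fun _ _ =>
    .of_bound hψ.aestronglyMeasurable 1 (.of_forall fun w => by
      rw [norm_of_nonneg (hψ01 w).1]; exact (hψ01 w).2)
  have hrestrict : ∫ w in Iic h', ψ w ∂expShift lam h ≤ (expShift lam h).real (Iic h') := by
    calc ∫ w in Iic h', ψ w ∂expShift lam h ≤ ∫ _ in Iic h', (1 : ℝ) ∂expShift lam h :=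
          integral_mono (hint _) (integrable_const 1) fun w => (hψ01 w).2
      _ = (expShift lam h).real (Iic h') := by simp
  conv_lhs => rw [eq_restrict_add_smul lam hh]
  rw [integral_add_measure (hint _) ((hint _).smul_measure ENNReal.ofReal_ne_top),
    integral_smul_measure,
    ENNReal.toReal_ofReal (exp_pos _).le, smul_eq_mul, ← measureReal_Iic hlam hh]
  linarith

end expShift

theorem power_envelope_neg_general (lam α : ℝ) (hlam : 0 < lam)
    (ψ : ℝ → ℝ) (hmeas : Measurable ψ) (hrange : ∀ w, ψ w ∈ Set.Icc (0 : ℝ) 1)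
    (hsize : ∫ w, ψ w ∂ expShift lam 0 ≤ α) :
    ∀ h : ℝ, h ≤ 0 → ∫ w, ψ w ∂ expShift lam h ≤ 1 - (1 - α) * exp (h / lam) := by
  intro h hh
  have hpower := expShift.integral_le_tail_add_mul_integral hlam hh hmeas hrange
  rw [sub_zero] at hpower
  nlinarith [exp_pos (h / lam)]

/-- Power envelope against negative alternatives: any level-`α` test of `μ_0`
has power at most `1 − (1 − α) e^{h/λ}` at `μ_h`, `h ≤ 0`. -/
theorem power_envelope_neg (lam α : ℝ) (hlam : 0 < lam) (hα : α ∈ Set.Ioo (0 : ℝ) 1)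
    (ψ : ℝ → ℝ) (hmeas : Measurable ψ) (hrange : ∀ w, ψ w ∈ Set.Icc (0 : ℝ) 1)
    (hsize : ∫ w, ψ w ∂ expShift lam 0 ≤ α) :
    ∀ h : ℝ, h ≤ 0 → ∫ w, ψ w ∂ expShift lam h ≤ 1 - (1 - α) * exp (h / lam) :=
  power_envelope_neg_general lam α hlam ψ hmeas hrange hsize
end
end

section
/- Assume additionally that G_j > 0 for every j, let λ := (Σ_{j=1}^L G_j/λ_j)^{-1}, and let α ∈ (0,1). Every measurable test ψ : ℝ^L → [0,1] with size ∫ψ dν_0 ≤ α satisfies, for every h > 0, ∫ψ dν_h ≤ min{α·e^{h/λ}, 1}. (That is, min{α·e^{h/λ}, 1} is the power envelope at level α for testing ν_0 against the positive local alternatives ν_h, h > 0, in the limit experiment of the covariate model.) -/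
/-!
Each factor of `ν_h` is the factor of `ν_0` multiplied by `e^{G_j h/λ_j}` and restricted to
`(G_j h, ∞)`, because `G_j h ≥ 0`. Hence `ν_h` is `e^{h/λ} ν_0` restricted to an orthant, so
`ν_h ≤ e^{h/λ} ν_0`, and a test of size at most `α` has power at most `α e^{h/λ}`; power at most
`1` holds because `ν_h` is a probability measure.
-/

open MeasureTheory Real

noncomputable section

attribute [local instance] Classical.propDecidable

/-- The product measure `ν_h` on `ℝ^L` whose `j`-th factor has Lebesgue density
`w ↦ λ_j⁻¹ e^{−(w − G_j h)/λ_j} 𝟙{w > G_j h}` (exponential with scale `λ_j`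
shifted to start at `G_j h`). -/
def nuMeas {L : ℕ} (lams G : Fin L → ℝ) (h : ℝ) : Measure (Fin L → ℝ) :=
  Measure.pi fun j => (volume : Measure ℝ).withDensity fun w =>
    ENNReal.ofReal ((lams j)⁻¹ * exp (-(w - G j * h) / lams j) * if G j * h < w then 1 else 0)

open Set ProbabilityTheory
open scoped ENNReal NNReal

theorem MeasureTheory.Measure.pi_nnreal_smul {ι : Type*} [Fintype ι] {α : ι → Type*}
    [∀ i, MeasurableSpace (α i)] (μ : ∀ i, Measure (α i)) [∀ i, SigmaFinite (μ i)]
    (c : ι → ℝ≥0) : Measure.pi (fun i => c i • μ i) = (∏ i, c i) • Measure.pi μ := by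
  refine Measure.pi_eq fun s hs => ?_
  simp only [Measure.pi_pi, Measure.smul_apply, Finset.prod_mul_distrib, ENNReal.smul_def,
    smul_eq_mul, ENNReal.ofNNReal_finsetProd]

theorem integral_le_mul_integral_of_le_smul {α : Type*} [MeasurableSpace α] {μ ν : Measure α}
    {c : ℝ≥0} (hμν : μ ≤ c • ν) {f : α → ℝ} (hf : 0 ≤ f) (hfi : Integrable f ν) :
    ∫ x, f x ∂μ ≤ c * ∫ x, f x ∂ν := by
  rw [← smul_eq_mul, ← NNReal.smul_def, ← integral_smul_nnreal_measure]
  exact integral_mono_measure hμν (.of_forall hf) hfi.smul_measure_nnreal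

def shiftedExpDensity (r a w : ℝ) : ℝ≥0∞ :=
  ENNReal.ofReal (r⁻¹ * exp (-(w - a) / r) * if a < w then 1 else 0)

def shiftedExpMeasure (r a : ℝ) : Measure ℝ :=
  volume.withDensity (shiftedExpDensity r a)

instance (r a : ℝ) : SigmaFinite (shiftedExpMeasure r a) :=
  SigmaFinite.withDensity_ofReal _

theorem nuMeas_eq_pi {L : ℕ} (lams G : Fin L → ℝ) (h : ℝ) :
    nuMeas lams G h = Measure.pi fun j => shiftedExpMeasure (lams j) (G j * h) := rfl

theorem measurable_shiftedExpDensity (r a : ℝ) : Measurable (shiftedExpDensity r a) := by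
  refine Measurable.ennreal_ofReal (Measurable.mul (by fun_prop) ?_)
  exact Measurable.ite measurableSet_Ioi measurable_const measurable_const

theorem shiftedExpDensity_ae_eq_exponentialPDF (r a : ℝ) :
    shiftedExpDensity r a =ᵐ[volume] fun w => exponentialPDF r⁻¹ (w - a) := by
  filter_upwards [Measure.ae_ne volume a] with w hw
  rcases hw.lt_or_gt with hwa | haw
  · rw [exponentialPDF_of_neg (sub_neg.2 hwa), shiftedExpDensity, if_neg hwa.not_gt, mul_zero,
      ENNReal.ofReal_zero]
  · rw [exponentialPDF_of_nonneg (sub_nonneg.2 haw.le), shiftedExpDensity, if_pos haw, mul_one,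
      neg_div, div_eq_inv_mul]

theorem lintegral_shiftedExpDensity {r : ℝ} (hr : 0 < r) (a : ℝ) :
    ∫⁻ w, shiftedExpDensity r a w = 1 := by
  rw [lintegral_congr_ae (shiftedExpDensity_ae_eq_exponentialPDF r a),
    lintegral_sub_right_eq_self (fun x => exponentialPDF r⁻¹ x) a,
    lintegral_exponentialPDF_eq_one (inv_pos.2 hr)]

theorem isProbabilityMeasure_shiftedExpMeasure {r : ℝ} (hr : 0 < r) (a : ℝ) :
    IsProbabilityMeasure (shiftedExpMeasure r a) :=
  ⟨by rw [shiftedExpMeasure, withDensity_apply _ .univ, Measure.restrict_univ,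
    lintegral_shiftedExpDensity hr]⟩

theorem isProbabilityMeasure_nuMeas {L : ℕ} {lams : Fin L → ℝ} (hlams : ∀ j, 0 < lams j)
    (G : Fin L → ℝ) (h : ℝ) : IsProbabilityMeasure (nuMeas lams G h) :=
  have := fun j => isProbabilityMeasure_shiftedExpMeasure (hlams j) (G j * h)
  nuMeas_eq_pi lams G h ▸ inferInstance

theorem shiftedExpDensity_eq_indicator (r : ℝ) {a b : ℝ} (hab : a ≤ b) :
    shiftedExpDensity r b =
      (Ioi b).indicator fun w => ENNReal.ofReal (exp ((b - a) / r)) * shiftedExpDensity r a w := by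
  ext w
  by_cases hbw : b < w
  · have haw : a < w := hab.trans_lt hbw
    have hexp : exp (-(w - b) / r) = exp ((b - a) / r) * exp (-(w - a) / r) := by
      rw [← exp_add]
      congr 1
      ring
    rw [indicator_of_mem (mem_Ioi.2 hbw), shiftedExpDensity, shiftedExpDensity, if_pos hbw,
      if_pos haw, ← ENNReal.ofReal_mul (exp_nonneg _), hexp]
    congr 1
    ring
  · rw [indicator_of_notMem (notMem_Ioi.2 (not_lt.1 hbw)), shiftedExpDensity, if_neg hbw,
      mul_zero, ENNReal.ofReal_zero]

theorem shiftedExpMeasure_eq_restrict (r : ℝ) {a b : ℝ} (hab : a ≤ b) :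
    shiftedExpMeasure r b =
      ((exp ((b - a) / r)).toNNReal • shiftedExpMeasure r a).restrict (Ioi b) := by
  rw [shiftedExpMeasure, shiftedExpMeasure, shiftedExpDensity_eq_indicator r hab,
    withDensity_indicator measurableSet_Ioi, ← restrict_withDensity measurableSet_Ioi]
  exact congrArg (Measure.restrict · (Ioi b))
    (withDensity_smul _ (measurable_shiftedExpDensity r a))

theorem nuMeas_eq_restrict_smul {L : ℕ} (lams : Fin L → ℝ) {G : Fin L → ℝ} (hG : ∀ j, 0 ≤ G j)
    {h : ℝ} (hh : 0 ≤ h) :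
    nuMeas lams G h = ((exp (h * ∑ j, G j / lams j)).toNNReal • nuMeas lams G 0).restrict
      (univ.pi fun j => Ioi (G j * h)) := by
  have hfactor : ∀ j, shiftedExpMeasure (lams j) (G j * h) =
      ((exp ((G j * h - G j * 0) / lams j)).toNNReal •
        shiftedExpMeasure (lams j) (G j * 0)).restrict (Ioi (G j * h)) := fun j =>
    shiftedExpMeasure_eq_restrict (lams j) (mul_le_mul_of_nonneg_left hh (hG j))
  have hprod : ∏ j, (exp ((G j * h - G j * 0) / lams j)).toNNReal =
      (exp (h * ∑ j, G j / lams j)).toNNReal := by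
    rw [← Real.toNNReal_prod_of_nonneg fun j _ => (exp_pos _).le, ← exp_sum, Finset.mul_sum]
    exact congrArg _ (congrArg _ (Finset.sum_congr rfl fun j _ => by ring))
  rw [nuMeas_eq_pi, nuMeas_eq_pi, ← hprod, ← Measure.pi_nnreal_smul, Measure.restrict_pi_pi]
  exact congrArg Measure.pi (funext hfactor)

theorem nu_power_envelope_pos_general (L : ℕ) (lams G : Fin L → ℝ)
    (hlams : ∀ j, 0 < lams j) (hG : ∀ j, 0 < G j) (α : ℝ)
    (ψ : (Fin L → ℝ) → ℝ) (hmeas : Measurable ψ) (hrange : ∀ w, ψ w ∈ Set.Icc (0 : ℝ) 1)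
    (hsize : ∫ w, ψ w ∂ nuMeas lams G 0 ≤ α) :
    ∀ h : ℝ, 0 < h →
      ∫ w, ψ w ∂ nuMeas lams G h ≤ min (α * exp (h / (∑ j, G j / lams j)⁻¹)) 1 := by
  intro h hh
  have hint : ∀ t, Integrable ψ (nuMeas lams G t) := fun t =>
    have := isProbabilityMeasure_nuMeas hlams G t
    .of_bound hmeas.aestronglyMeasurable 1 (.of_forall fun w => abs_le.2
      ⟨by linarith [(hrange w).1], (hrange w).2⟩)
  have hle : nuMeas lams G h ≤ (exp (h * ∑ j, G j / lams j)).toNNReal • nuMeas lams G 0 :=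
    (nuMeas_eq_restrict_smul lams (fun j => (hG j).le) hh.le).trans_le Measure.restrict_le_self
  refine le_min ?_ ?_
  · calc ∫ w, ψ w ∂nuMeas lams G h
        ≤ exp (h * ∑ j, G j / lams j) * ∫ w, ψ w ∂nuMeas lams G 0 := by
          simpa only [Real.coe_toNNReal _ (exp_pos _).le] using
            integral_le_mul_integral_of_le_smul hle (fun w => (hrange w).1) (hint 0)
      _ ≤ exp (h * ∑ j, G j / lams j) * α := by gcongr
      _ = α * exp (h / (∑ j, G j / lams j)⁻¹) := by rw [div_inv_eq_mul, mul_comm]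
  · have := isProbabilityMeasure_nuMeas hlams G h
    calc ∫ w, ψ w ∂nuMeas lams G h ≤ ∫ _, (1 : ℝ) ∂nuMeas lams G h :=
          integral_mono (hint h) (integrable_const 1) fun w => (hrange w).2
      _ = 1 := by simp

/-- Power envelope against positive alternatives in the limit experiment of the
covariate model, when every `G_j > 0`, with `λ = (Σ_j G_j/λ_j)⁻¹`. -/
theorem nu_power_envelope_pos (L : ℕ) (hL : 1 ≤ L) (lams G : Fin L → ℝ)
    (hlams : ∀ j, 0 < lams j) (hG : ∀ j, 0 < G j) (α : ℝ) (hα : α ∈ Set.Ioo (0 : ℝ) 1)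
    (ψ : (Fin L → ℝ) → ℝ) (hmeas : Measurable ψ) (hrange : ∀ w, ψ w ∈ Set.Icc (0 : ℝ) 1)
    (hsize : ∫ w, ψ w ∂ nuMeas lams G 0 ≤ α) :
    ∀ h : ℝ, 0 < h →
      ∫ w, ψ w ∂ nuMeas lams G h ≤ min (α * exp (h / (∑ j, G j / lams j)⁻¹)) 1 :=
  nu_power_envelope_pos_general L lams G hlams hG α ψ hmeas hrange hsize

end
end

section
/- Let N ⊆ ℝ be an open interval containing θ0, let f : ℝ × N → ℝ be jointly continuous, and let g : N → ℝ be continuously differentiable. Suppose that (a) for every y ∈ ℝ the map θ ↦ f(y,θ) is differentiable on N with (y,θ) ↦ ∂θf(y,θ) jointly continuous; (b) there is an integrable function F : ℝ → ℝ such that |∂θf(y,θ)| ≤ F(y) for all θ ∈ N and all y ≥ inf_{θ∈N} g(θ); (c) y ↦ f(y,θ) is integrable on [g(θ), ∞) for each θ ∈ N; and (d) ∫_{g(θ)}^{∞} f(y,θ) dy = 1 for every θ ∈ N. Then ∫_{g(θ0)}^{∞} ∂θf(y,θ0) dy = f(g(θ0), θ0)·g'(θ0). (This is the identity E[∂θ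 log f(Y|θ0)] = λ^{-1} for the boundary model, used in the proof of the weak convergence of the likelihood-ratio process.) -/
/-!
Write `c = g θ0`. By the normalisation, for every `θ ∈ N`
`∫_{[c,∞)} f(y,θ) dy = 1 + ∫_c^{g θ} f(y,θ) dy`.
Differentiating the left side under the integral sign (dominated by `F` on the tail and by a
compactness bound on the bounded piece below `inf g`) gives `∫_{[c,∞)} ∂θf(y,θ0) dy`; the right
side has derivative `f(c,θ0) g'(θ0)`, since `f(·,θ) - f(c,θ0)` is uniformly small on the shrinking
interval between `c` and `g θ`.
-/

open MeasureTheory Set Filter Topology Asymptotics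

theorem ContinuousOn.continuous_uncurry_right {X Y Z : Type*} [TopologicalSpace X]
    [TopologicalSpace Y] [TopologicalSpace Z] {u : X → Y → Z} {N : Set Y}
    (hu : ContinuousOn (fun p : X × Y => u p.1 p.2) (univ ×ˢ N)) {y : Y} (hy : y ∈ N) :
    Continuous fun x => u x y :=
  hu.comp_continuous (continuous_id.prodMk continuous_const) fun _ => ⟨trivial, hy⟩

section

variable {E : Type*} [NormedAddCommGroup E]

theorem IntervalIntegrable.integrableOn_Ici {h : ℝ → E} {a b : ℝ}
    (hab : IntervalIntegrable h volume a b) (hb : IntegrableOn h (Ici b)) :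
    IntegrableOn h (Ici a) := by
  rcases le_total a b with hle | hle
  · refine (((intervalIntegrable_iff_integrableOn_Icc_of_le hle).1 hab).union hb).mono_set ?_
    rw [Icc_union_Ici_eq_Ici hle]
  · exact hb.mono_set (Ici_subset_Ici.2 hle)

theorem exists_integrable_bound_of_continuousOn_Icc {X : Type*} [TopologicalSpace X]
    {G : ℝ → X → E} {K : Set X} (hK : IsCompact K) {c m : ℝ}
    (hG : ContinuousOn (fun p : ℝ × X => G p.1 p.2) (Icc c m ×ˢ K)) {F : ℝ → ℝ}
    (hF : Integrable F) (htail : ∀ x ∈ K, ∀ y, m ≤ y → ‖G y x‖ ≤ F y) :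
    ∃ bound : ℝ → ℝ, Integrable bound ∧ ∀ x ∈ K, ∀ y, c ≤ y → ‖G y x‖ ≤ bound y := by
  obtain ⟨C, hC⟩ := (isCompact_Icc.prod hK).exists_bound_of_continuousOn hG
  refine ⟨F ⊔ (Icc c m).indicator fun _ => C, hF.sup ?_, fun x hx y hy => ?_⟩
  · exact (integrable_indicator_iff measurableSet_Icc).2 (integrableOn_const measure_Icc_lt_top.ne)
  rcases le_total y m with hym | hmy
  · refine le_sup_of_le_right ?_
    rw [indicator_of_mem (show y ∈ Icc c m from ⟨hy, hym⟩)]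
    exact hC (y, x) ⟨⟨hy, hym⟩, hx⟩
  · exact le_sup_of_le_left (htail x hx y hmy)

variable [NormedSpace ℝ E]

theorem hasDerivAt_setIntegral_Ici_of_tail_bound {f fθ : ℝ → ℝ → E} {N : Set ℝ}
    {θ0 c m : ℝ} {F : ℝ → ℝ} (hN : IsOpen N) (hθ0 : θ0 ∈ N)
    (hf : ContinuousOn (fun p : ℝ × ℝ => f p.1 p.2) (univ ×ˢ N))
    (hderiv : ∀ y, ∀ θ ∈ N, HasDerivAt (fun t => f y t) (fθ y θ) θ)
    (hfθ : ContinuousOn (fun p : ℝ × ℝ => fθ p.1 p.2) (univ ×ˢ N))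
    (hF : Integrable F) (hdom : ∀ θ ∈ N, ∀ y, m ≤ y → ‖fθ y θ‖ ≤ F y)
    (hint : IntegrableOn (fun y => f y θ0) (Ici c)) :
    HasDerivAt (fun θ => ∫ y in Ici c, f y θ) (∫ y in Ici c, fθ y θ0) θ0 := by
  obtain ⟨ε, hε, hball⟩ := Metric.nhds_basis_closedBall.mem_iff.1 (hN.mem_nhds hθ0)
  obtain ⟨bound, hbound_int, hbound⟩ := exists_integrable_bound_of_continuousOn_Icc
    (isCompact_closedBall θ0 ε) (c := c) (hfθ.mono (prod_mono (subset_univ _) hball)) hF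
    fun θ hθ => hdom θ (hball hθ)
  refine (hasDerivAt_integral_of_dominated_loc_of_deriv_le
    (μ := volume.restrict (Ici c)) (F := fun θ y => f y θ) (Metric.ball_mem_nhds θ0 hε)
    ?_ hint ((hfθ.continuous_uncurry_right hθ0).aestronglyMeasurable) ?_ hbound_int.restrict
    (ae_of_all _ fun y θ hθ => hderiv y θ (hball (Metric.ball_subset_closedBall hθ)))).2
  · filter_upwards [hN.mem_nhds hθ0] with θ hθ
    exact (hf.continuous_uncurry_right hθ).aestronglyMeasurable
  · filter_upwards [self_mem_ae_restrict measurableSet_Ici] with y hy θ hθ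
    exact hbound θ (Metric.ball_subset_closedBall hθ) y hy

variable [CompleteSpace E]

theorem isLittleO_intervalIntegral_sub_smul {f : ℝ → ℝ → E} {u : ℝ → ℝ} {c θ0 : ℝ}
    (hf : ContinuousAt (fun p : ℝ × ℝ => f p.1 p.2) (c, θ0)) (hu : Tendsto u (𝓝 θ0) (𝓝 c))
    (hfi : ∀ᶠ θ in 𝓝 θ0, IntervalIntegrable (fun y => f y θ) volume c (u θ)) :
    (fun θ => (∫ y in c..u θ, f y θ) - (u θ - c) • f c θ0) =o[𝓝 θ0] fun θ => u θ - c := by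
  refine isLittleO_iff.2 fun ε hε => ?_
  obtain ⟨η, hη, hfη⟩ := Metric.continuousAt_iff.1 hf ε hε
  filter_upwards [hfi, Metric.tendsto_nhds.1 hu η hη, Metric.ball_mem_nhds θ0 hη]
    with θ hθi hθu hθ
  have hclose : ∀ y ∈ uIoc c (u θ), ‖f y θ - f c θ0‖ ≤ ε := by
    intro y hy
    have hyc : |y - c| ≤ |u θ - c| := abs_sub_left_of_mem_uIcc (uIoc_subset_uIcc hy)
    rw [← dist_eq_norm]
    refine (hfη (x := (y, θ)) ?_).le
    rw [Prod.dist_eq]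
    exact max_lt (hyc.trans_lt hθu) hθ
  calc ‖(∫ y in c..u θ, f y θ) - (u θ - c) • f c θ0‖
      = ‖∫ y in c..u θ, (f y θ - f c θ0)‖ := by
        rw [intervalIntegral.integral_sub hθi intervalIntegrable_const,
          intervalIntegral.integral_const]
    _ ≤ ε * |u θ - c| := intervalIntegral.norm_integral_le_of_norm_le_const hclose
    _ = ε * ‖u θ - c‖ := rfl

theorem hasDerivAt_intervalIntegral_param_upper {f : ℝ → ℝ → E} {g : ℝ → ℝ} {g' θ0 : ℝ}
    (hf : ContinuousAt (fun p : ℝ × ℝ => f p.1 p.2) (g θ0, θ0))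
    (hfi : ∀ᶠ θ in 𝓝 θ0, IntervalIntegrable (fun y => f y θ) volume (g θ0) (g θ))
    (hg : HasDerivAt g g' θ0) :
    HasDerivAt (fun θ => ∫ y in g θ0..g θ, f y θ) (g' • f (g θ0) θ0) θ0 := by
  set R := fun θ => (∫ y in g θ0..g θ, f y θ) - (g θ - g θ0) • f (g θ0) θ0
  have hR : HasDerivAt R 0 θ0 := by
    rw [hasDerivAt_iff_isLittleO]
    simpa [R] using (isLittleO_intervalIntegral_sub_smul hf hg.continuousAt.tendsto hfi).trans_isBigO
      hg.isBigO_sub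
  convert ((hg.sub_const (g θ0)).smul_const (f (g θ0) θ0)).add hR using 1
  · ext θ
    simp [R]
  · simp

end

theorem deriv_under_integral_boundary_general (θ0 : ℝ) (N : Set ℝ) (hNopen : IsOpen N)
    (hθ0 : θ0 ∈ N)
    (f fθ : ℝ → ℝ → ℝ) (g : ℝ → ℝ)
    (hf_cont : ContinuousOn (fun p : ℝ × ℝ => f p.1 p.2) (Set.univ ×ˢ N))
    (hg : ContDiffOn ℝ 1 g N)
    (hderiv : ∀ y : ℝ, ∀ θ ∈ N, HasDerivAt (fun t => f y t) (fθ y θ) θ)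
    (hfθ_cont : ContinuousOn (fun p : ℝ × ℝ => fθ p.1 p.2) (Set.univ ×ˢ N))
    (F : ℝ → ℝ) (hF : Integrable F)
    (hdom : ∀ θ ∈ N, ∀ y : ℝ, (⨅ θ' ∈ N, g θ') ≤ y → |fθ y θ| ≤ F y)
    (hint : ∀ θ ∈ N, IntegrableOn (fun y => f y θ) (Set.Ici (g θ)))
    (hone : ∀ θ ∈ N, ∫ y in Set.Ici (g θ), f y θ = 1) :
    ∫ y in Set.Ici (g θ0), fθ y θ0 = f (g θ0) θ0 * deriv g θ0 := by
  have hsection : ∀ θ ∈ N, Continuous fun y => f y θ := fun θ hθ =>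
    hf_cont.continuous_uncurry_right hθ
  have hgθ0 : HasDerivAt g (deriv g θ0) θ0 :=
    ((hg.differentiableOn one_ne_zero θ0 hθ0).differentiableAt (hNopen.mem_nhds hθ0)).hasDerivAt
  have hA := hasDerivAt_setIntegral_Ici_of_tail_bound hNopen hθ0 hf_cont hderiv hfθ_cont hF
    (by simpa only [Real.norm_eq_abs] using hdom) (hint θ0 hθ0)
  have hB := hasDerivAt_intervalIntegral_param_upper
    (hf_cont.continuousAt ((isOpen_univ.prod hNopen).mem_nhds ⟨trivial, hθ0⟩))
    (eventually_of_mem (hNopen.mem_nhds hθ0) fun θ hθ => (hsection θ hθ).intervalIntegrable _ _)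
    hgθ0
  have hsplit : (fun θ => ∫ y in Ici (g θ0), f y θ)
      =ᶠ[𝓝 θ0] fun θ => (∫ y in g θ0..g θ, f y θ) + 1 := by
    filter_upwards [hNopen.mem_nhds hθ0] with θ hθ
    have hI := (hsection θ hθ).intervalIntegrable (μ := volume) (g θ0) (g θ)
    rw [← hone θ hθ, ← intervalIntegral.integral_Ici_sub_Ici' (hI.integrableOn_Ici (hint θ hθ))
      (hint θ hθ), sub_add_cancel]
  rw [hA.unique ((hB.add_const 1).congr_of_eventuallyEq hsplit), smul_eq_mul, mul_comm]

/-- Differentiation under the integral sign at a moving boundary: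
`∫_{g(θ0)}^∞ ∂_θ f(y, θ0) dy = f(g(θ0), θ0) · g'(θ0)`, i.e. the identity
`E[∂_θ log f(Y|θ0)] = λ⁻¹` for the boundary model. -/
theorem deriv_under_integral_boundary (θ0 : ℝ) (N : Set ℝ) (hNopen : IsOpen N)
    (hNconv : Convex ℝ N) (hθ0 : θ0 ∈ N)
    (f fθ : ℝ → ℝ → ℝ) (g : ℝ → ℝ)
    (hf_cont : ContinuousOn (fun p : ℝ × ℝ => f p.1 p.2) (Set.univ ×ˢ N))
    (hg : ContDiffOn ℝ 1 g N)
    (hderiv : ∀ y : ℝ, ∀ θ ∈ N, HasDerivAt (fun t => f y t) (fθ y θ) θ)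
    (hfθ_cont : ContinuousOn (fun p : ℝ × ℝ => fθ p.1 p.2) (Set.univ ×ˢ N))
    (F : ℝ → ℝ) (hF : Integrable F)
    (hdom : ∀ θ ∈ N, ∀ y : ℝ, (⨅ θ' ∈ N, g θ') ≤ y → |fθ y θ| ≤ F y)
    (hint : ∀ θ ∈ N, IntegrableOn (fun y => f y θ) (Set.Ici (g θ)))
    (hone : ∀ θ ∈ N, ∫ y in Set.Ici (g θ), f y θ = 1) :
    ∫ y in Set.Ici (g θ0), fθ y θ0 = f (g θ0) θ0 * deriv g θ0 :=
  deriv_under_integral_boundary_general θ0 N hNopen hθ0 f fθ g hf_cont hg hderiv hfθ_cont F hF hdom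
    hint hone
end
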